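/- Let S be the monoid presented by generators a_0, a_1, a_2, … subject to the relations a_i a_j = a_{j+1} a_i for all i ≤ j, regarded as a right S-act over itself by right multiplication. Then every S-map h : S → S is injective. -/

import Mathlib

/-!
An `S`-map satisfies `h x = h 1 * x`, so it is injective as soon as `S` is left cancellative.
To see that it is, let `S` act on lists of indices, `aᵢ` acting by inserting `i` into a strictly
decreasing list the way the relations dictate. Every generator acts injectively, and `x ↦ x • []`
is injective because the word read off `x • []` represents `x`. So `c * x = c * y` gives
`c • (x • []) = c • (y • [])`, hence `x • [] = y • []` and `x = y`.
-/

/-- The defining relations of Kruml's monoid: `aᵢ aⱼ = a_{j+1} aᵢ` for all `i ≤ j`,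
as a relation on the free monoid on `ℕ`. -/
inductive KrumlRel : FreeMonoid ℕ → FreeMonoid ℕ → Prop
  | rel (i j : ℕ) : i ≤ j →
      KrumlRel (FreeMonoid.of i * FreeMonoid.of j) (FreeMonoid.of (j + 1) * FreeMonoid.of i)

/-- Kruml's monoid `S = ⟨a₀, a₁, a₂, … ∣ aᵢaⱼ = a_{j+1}aᵢ for i ≤ j⟩`:
the quotient of the free monoid on `ℕ` by the congruence generated by the relations. -/
abbrev KrumlMonoid : Type := (conGen KrumlRel).Quotient

open Function

theorem IsLeftCancelMul.of_injective_orbit {M α : Type*} [Monoid M] (φ : M →* Function.End α)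
    (hφ : ∀ m, Injective (φ m)) (a : α) (ha : Injective fun m => φ m a) : IsLeftCancelMul M :=
  ⟨fun c x y hxy => ha <| hφ c <| by
    have := congrArg (fun m => φ m a) hxy
    rwa [map_mul, map_mul] at this⟩

theorem injective_of_map_mul_right {M : Type*} [Monoid M] [IsLeftCancelMul M] (h : M → M)
    (hmap : ∀ x s : M, h (x * s) = h x * s) : Injective h := fun x y hxy =>
  mul_left_cancel (a := h 1) <| by rwa [← hmap, ← hmap, one_mul, one_mul]

namespace KrumlMonoid

/-- `insertGen i l` is the normal form of `aᵢ · l`: `aᵢ` moves right past every `aₚ` with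
`i ≤ p`, turning it into `a_{p+1}`, until it meets a smaller index. -/
def insertGen (i : ℕ) : List ℕ → List ℕ
  | [] => [i]
  | p :: t => if p < i then i :: p :: t else (p + 1) :: insertGen i t

@[simp] theorem insertGen_cons_of_lt {i p : ℕ} (h : p < i) (t : List ℕ) :
    insertGen i (p :: t) = i :: p :: t := if_pos h

@[simp] theorem insertGen_cons_of_le {i p : ℕ} (h : i ≤ p) (t : List ℕ) :
    insertGen i (p :: t) = (p + 1) :: insertGen i t := if_neg h.not_gt

def eraseGen (i : ℕ) : List ℕ → List ℕ
  | [] => []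
  | p :: t => if p = i then t else (p - 1) :: eraseGen i t

theorem eraseGen_insertGen (i : ℕ) : LeftInverse (eraseGen i) (insertGen i) := by
  intro l
  induction l with
  | nil => simp [insertGen, eraseGen]
  | cons p t ih =>
    rcases lt_or_ge p i with hp | hp
    · simp [eraseGen, hp]
    · simp [eraseGen, hp, ih, show p + 1 ≠ i by omega]

theorem insertGen_injective (i : ℕ) : Injective (insertGen i) :=
  (eraseGen_insertGen i).injective

theorem insertGen_insertGen_of_le {i j : ℕ} (hij : i ≤ j) (l : List ℕ) :
    insertGen i (insertGen j l) = insertGen (j + 1) (insertGen i l) := by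
  induction l with
  | nil => simp (disch := omega) [insertGen]
  | cons p t ih =>
    rcases lt_or_ge p j with hj | hj
    · rcases lt_or_ge p i with hi | hi <;> simp (disch := omega)
    · simp (disch := omega) [ih]

def gen (i : ℕ) : KrumlMonoid := (conGen KrumlRel).mk' (.of i)

theorem gen_mul_gen_of_le {i j : ℕ} (hij : i ≤ j) : gen i * gen j = gen (j + 1) * gen i :=
  (Con.eq _).mpr <| .of _ _ (.rel i j hij)

theorem induction_on {motive : KrumlMonoid → Prop} (x : KrumlMonoid) (one : motive 1)
    (gen_mul : ∀ i x, motive x → motive (gen i * x)) : motive x := by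
  obtain ⟨w, rfl⟩ := (conGen KrumlRel).mk'_surjective x
  induction w using FreeMonoid.inductionOn' with
  | one => exact one
  | of_mul i w ih => exact gen_mul i _ ih

def ofWord (l : List ℕ) : KrumlMonoid := (l.map gen).prod

theorem gen_mul_ofWord (i : ℕ) (l : List ℕ) : gen i * ofWord l = ofWord (insertGen i l) := by
  induction l with
  | nil => simp [ofWord, insertGen]
  | cons p t ih =>
    rcases lt_or_ge p i with hp | hp
    · simp [ofWord, hp]
    · simp only [ofWord, insertGen_cons_of_le hp, List.map_cons, List.prod_cons] at ih ⊢
      rw [← mul_assoc, gen_mul_gen_of_le hp, mul_assoc, ih]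

def act : KrumlMonoid →* Function.End (List ℕ) :=
  (conGen KrumlRel).lift (FreeMonoid.lift fun i => (insertGen i : Function.End (List ℕ))) <|
    Con.conGen_le.mpr fun _ _ ⟨i, j, hij⟩ => by
      simp only [Con.ker_rel, map_mul]
      exact funext (insertGen_insertGen_of_le hij)

theorem act_gen (i : ℕ) : act (gen i) = insertGen i :=
  FreeMonoid.lift_eval_of _ i

theorem act_injective (x : KrumlMonoid) : Injective (act x) := by
  induction x using induction_on with
  | one => exact injective_id
  | gen_mul i x ih => rw [map_mul, act_gen]; exact (insertGen_injective i).comp ih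

theorem ofWord_act_nil (x : KrumlMonoid) : ofWord (act x []) = x := by
  induction x using induction_on with
  | one => rfl
  | gen_mul i x ih =>
    rw [map_mul, act_gen]
    exact (gen_mul_ofWord i _).symm.trans (congrArg _ ih)

instance : IsLeftCancelMul KrumlMonoid :=
  .of_injective_orbit act act_injective [] (LeftInverse.injective (g := ofWord) ofWord_act_nil)

end KrumlMonoid

/-- Every `S`-map `h : S → S` (where `S` acts on itself by right multiplication,
so the `S`-map condition is `h (x * s) = h x * s`) is injective. -/
theorem krumlMonoid_sMap_injective (h : KrumlMonoid → KrumlMonoid)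
    (hmap : ∀ x s : KrumlMonoid, h (x * s) = h x * s) :
    Function.Injective h :=
  injective_of_map_mul_right h hmap
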